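/- arXiv:1008.4544 — 3 statements merged into one kernel-verified Lean document; each statement's English description precedes it below -/
import Mathlib

section
/- Let τ be an involutive automorphism of a Lie algebra g (char ≠ 2), u a Lie subalgebra of g, and n a τ-stable Lie subalgebra with u ⊆ n and [u, n] ⊆ u. Then pr_τ(u) is a Lie subalgebra of g^τ contained in n^τ = {Z ∈ n : τZ = Z}. -/
/-- Let `τ` be an involutive automorphism of a Lie algebra `g` (char `≠ 2`),
`u` a Lie subalgebra of `g`, and `n` a `τ`-stable Lie subalgebra with `u ⊆ n` and
`[u, n] ⊆ u`.  Then `pr_τ(u)` is a Lie subalgebra of `g^τ` contained in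
`n^τ = {Z ∈ n : τ Z = Z}`. -/
theorem proj_of_subalgebra_is_subalgebra
    {K : Type*} [Field K] (h2 : (2 : K) ≠ 0)
    {g : Type*} [LieRing g] [LieAlgebra K g]
    (τ : g →ₗ⁅K⁆ g) (hτ : ∀ Z : g, τ (τ Z) = Z)
    (pr : g →ₗ[K] g) (hpr : ∀ Z : g, pr Z = (2 : K)⁻¹ • (Z + τ Z))
    (u n : LieSubalgebra K g)
    (hn : ∀ Z ∈ n, τ Z ∈ n)
    (hun : u ≤ n)
    (hbr : ∀ X ∈ u, ∀ Y ∈ n, ⁅X, Y⁆ ∈ u) :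
    ∃ s : LieSubalgebra K g,
      (s : Set g) = pr '' (u : Set g) ∧
      (s : Set g) ⊆ {Z : g | Z ∈ n ∧ τ Z = Z} := by
  refine ⟨{ toSubmodule := (u : Submodule K g).map pr, lie_mem' := ?_ }, rfl, ?_⟩
  · rintro x y ⟨X, hX, rfl⟩ ⟨Y, hY, rfl⟩
    have hX' : X ∈ u := hX
    have hY' : Y ∈ u := hY
    have h1 : ⁅X, Y⁆ ∈ u := u.lie_mem hX' hY'
    have h2' : ⁅X, τ Y⁆ ∈ u := hbr X hX' (τ Y) (hn Y (hun hY'))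
    have h3 : ⁅τ X, Y⁆ ∈ u := by
      have := u.neg_mem (hbr Y hY' (τ X) (hn X (hun hX')))
      rwa [lie_skew] at this
    refine ⟨(2 : K)⁻¹ • ⁅X, Y⁆ + ((2 : K)⁻¹ * (2 : K)⁻¹) • (⁅X, τ Y⁆ + ⁅τ X, Y⁆),
      u.add_mem (u.smul_mem _ h1) (u.smul_mem _ (u.add_mem h2' h3)), ?_⟩
    simp only [hpr, map_add, map_smul, LieHom.map_lie, hτ, lie_add, add_lie, lie_smul,
      smul_lie, smul_add]
    match_scalars <;> (field_simp; try ring)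
  · rintro z ⟨X, hX, rfl⟩
    have hXn : X ∈ n := hun hX
    refine ⟨?_, ?_⟩
    · rw [hpr]
      exact n.smul_mem _ (n.add_mem hXn (hn X hXn))
    · simp [hpr, map_add, hτ, add_comm]
end

section
/- With notation as above, if p = l ⊕ u is a parabolic subalgebra containing the τ-stable Cartan subalgebra j, with τ(u) ⊆ p, then p^τ = l^τ ⊕ pr_τ(u), where pr_τ(Z) = (Z + τZ)/2. -/
/-- In the graded setting of a complex semisimple Lie algebra with
`τ`-stable Cartan subalgebra, let `p = l ⊕ u` be a parabolic subalgebra with Levi part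
`l = ⊕_{α ∈ Δ_l} g_α` (τ-stable) and nilradical `u = ⊕_{α ∈ Δ_u} g_α` satisfying
`τ(u) ⊆ p`.  Then `p^τ = l^τ ⊕ pr_τ(u)`, where `pr_τ(Z) = (Z + τZ)/2`. -/
theorem fixed_part_of_parabolic
    {g : Type*} [LieRing g] [LieAlgebra ℂ g]
    {ι : Type*} (gsp : ι → Submodule ℂ g)
    (σ : ι → ι) (hσ : ∀ α, σ (σ α) = α)
    (τ : g →ₗ[ℂ] g) (hτ : ∀ x, τ (τ x) = x)
    (hmap : ∀ α : ι, ∀ x ∈ gsp α, τ x ∈ gsp (σ α))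
    (Δl Δu : Set ι) (hdisj : Disjoint Δl Δu)
    (hindep : iSupIndep fun α : (Δl ∪ Δu : Set ι) => gsp α)
    (hΔlσ : ∀ α ∈ Δl, σ α ∈ Δl)            -- `l` is `τ`-stable
    (hΔuσ : ∀ α ∈ Δu, σ α ∈ Δl ∪ Δu)       -- `τ(u) ⊆ p`
    (hdichotomy : ∀ α ∈ Δl ∪ Δu, σ α = α →
      (∀ x ∈ gsp α, τ x = x) ∨ (∀ x ∈ gsp α, τ x = -x))
    (l u : Submodule ℂ g)
    (hl : l = ⨆ α ∈ Δl, gsp α) (hu : u = ⨆ α ∈ Δu, gsp α) :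
    (l ⊔ u) ⊓ LinearMap.ker (τ - LinearMap.id)
      = (l ⊓ LinearMap.ker (τ - LinearMap.id))
        ⊔ Submodule.map ((2 : ℂ)⁻¹ • (LinearMap.id + τ)) u := by
  -- `l` is τ-stable
  have hτl : ∀ x ∈ l, τ x ∈ l := by
    have hle : l ≤ Submodule.comap τ l := by
      conv_lhs => rw [hl]
      refine iSup₂_le fun α hα => fun x hx => ?_
      simp only [Submodule.mem_comap]
      rw [hl]
      exact Submodule.mem_iSup_of_mem (σ α)
        (Submodule.mem_iSup_of_mem (hΔlσ α hα) (hmap α x hx))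
    exact fun x hx => hle hx
  -- `τ(u) ⊆ l ⊔ u`
  have hτu : ∀ x ∈ u, τ x ∈ l ⊔ u := by
    have hle : u ≤ Submodule.comap τ (l ⊔ u) := by
      conv_lhs => rw [hu]
      refine iSup₂_le fun α hα => fun x hx => ?_
      simp only [Submodule.mem_comap]
      rcases hΔuσ α hα with h | h
      · refine Submodule.mem_sup_left ?_
        rw [hl]
        exact Submodule.mem_iSup_of_mem (σ α)
          (Submodule.mem_iSup_of_mem h (hmap α x hx))
      · refine Submodule.mem_sup_right ?_
        rw [hu]
        exact Submodule.mem_iSup_of_mem (σ α)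
          (Submodule.mem_iSup_of_mem h (hmap α x hx))
    exact fun x hx => hle hx
  set pr : g →ₗ[ℂ] g := (2 : ℂ)⁻¹ • (LinearMap.id + τ) with hpr
  have hpr_apply : ∀ z : g, pr z = (2 : ℂ)⁻¹ • (z + τ z) := by
    intro z
    simp [hpr]
  -- pr z is always fixed by τ
  have hpr_fixed : ∀ z : g, τ (pr z) = pr z := by
    intro z
    rw [hpr_apply, map_smul, map_add, hτ, add_comm (τ z) z]
  have hker : ∀ z : g, z ∈ LinearMap.ker (τ - LinearMap.id) ↔ τ z = z := by
    intro z
    simp [LinearMap.mem_ker, sub_eq_zero]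
  apply le_antisymm
  · rintro x ⟨hxp, hxk⟩
    have hfix : τ x = x := (hker x).mp hxk
    obtain ⟨a, ha, b, hb, rfl⟩ := Submodule.mem_sup.mp hxp
    have hx_eq : a + b = pr a + pr b := by
      have : pr (a + b) = a + b := by
        rw [hpr_apply, hfix]
        module
      rw [← this, map_add]
    rw [hx_eq]
    refine Submodule.add_mem _ (Submodule.mem_sup_left ?_) (Submodule.mem_sup_right ?_)
    · refine ⟨?_, (hker _).mpr (hpr_fixed a)⟩
      rw [hpr_apply]
      exact Submodule.smul_mem _ _ (Submodule.add_mem _ ha (hτl a ha))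
    · exact ⟨b, hb, rfl⟩
  · refine sup_le (inf_le_inf_right _ le_sup_left) ?_
    rintro _ ⟨b, hb, rfl⟩
    refine ⟨?_, (hker _).mpr (hpr_fixed b)⟩
    rw [hpr_apply]
    exact Submodule.smul_mem _ _ (Submodule.add_mem _ (Submodule.mem_sup_right hb) (hτu b hb))
end

section
/- Conversely, if the j-module S(n₋) is multiplicity-free, where n₋ = ⊕_{i=1}^m L_{μ_i} with one-dimensional weight spaces, then the weights μ₁, …, μ_m are linearly independent over ℚ; in particular m ≤ dim j*. -/
/-- Conversely, if the `j`-module `S(n₋)` is multiplicity-free, i.e. the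
map `k ∈ ℕ^m ↦ Σ kᵢ μᵢ` is injective, where `n₋ = ⊕_{i=1}^m L_{μ_i}` has one-dimensional
weight spaces of weights `μ₁, …, μ_m`, then the weights are linearly independent over
`ℚ`; in particular `m ≤ dim j*`. -/
theorem linearIndependent_of_symmetric_algebra_multiplicity_free
    {M : Type*} [AddCommGroup M] [Module ℚ M] [FiniteDimensional ℚ M]
    (m : ℕ) (μ : Fin m → M)
    (hinj : Function.Injective (fun k : Fin m → ℕ => ∑ i : Fin m, (k i) • μ i)) :
    LinearIndependent ℚ μ ∧ m ≤ Module.finrank ℚ M := by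
  have hZ : LinearIndependent ℤ μ := by
    rw [Fintype.linearIndependent_iff]
    intro c hc i
    set k : Fin m → ℕ := fun i => (c i).toNat with hk
    set k' : Fin m → ℕ := fun i => (-(c i)).toNat with hk'
    have hkk : k = k' := by
      apply hinj
      simp only
      have : ∀ j, (k j : ℤ) • μ j - (k' j : ℤ) • μ j = c j • μ j := by
        intro j
        rw [← sub_smul]
        congr 1
        simp only [hk, hk']
        omega
      have h2 : (∑ j, (k j : ℤ) • μ j) - ∑ j, (k' j : ℤ) • μ j = 0 := by
        rw [← Finset.sum_sub_distrib]
        simp_rw [this]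
        exact hc
      have h3 : (∑ j, (k j : ℤ) • μ j) = ∑ j, (k' j : ℤ) • μ j :=
        sub_eq_zero.mp h2
      simpa using h3
    have := congrFun hkk i
    simp only [hk, hk'] at this
    omega
  have hQ : LinearIndependent ℚ μ := (LinearIndependent.iff_fractionRing ℤ ℚ).mp hZ
  exact ⟨hQ, by simpa using hQ.fintype_card_le_finrank⟩
end
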